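/- arXiv:1507.06341 — 4 statements merged into one kernel-verified Lean document; each statement's English description precedes it below -/
import Mathlib

section
/- Let G be a graph, r > 0 an integer, and W ⊆ V(G) a set such that every vertex of W has degree exactly r in G and the induced subgraph G[W] is connected. Suppose W' ⊆ V(G) is a set such that the induced subgraph G[W'] is r-regular and W ∩ W' is nonempty. Then W ⊆ W'. -/
open SimpleGraph

attribute [local instance] Classical.propDecidable

theorem stmt1 {V : Type*} [Fintype V] (G : SimpleGraph V) (r : ℕ) (hr : 0 < r)
    (W W' : Set V)
    (hdeg : ∀ v ∈ W, G.degree v = r)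
    (hWconn : (G.induce W).Connected)
    (hreg : (G.induce W').IsRegularOfDegree r)
    (hinter : (W ∩ W').Nonempty) :
    W ⊆ W' := by
  classical
  -- key claim: if u ∈ W ∩ W', every G-neighbor of u is in W'
  have key : ∀ u (hu : u ∈ W) (hu' : u ∈ W'), ∀ w, G.Adj u w → w ∈ W' := by
    intro u hu hu' w hw
    set u' : W' := ⟨u, hu'⟩
    have hS : ((G.induce W').neighborFinset u').image Subtype.val ⊆ G.neighborFinset u := by
      intro x hx
      simp only [Finset.mem_image, mem_neighborFinset] at hx ⊢
      obtain ⟨y, hy, rfl⟩ := hx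
      exact hy
    have hcard : (G.neighborFinset u).card ≤
        (((G.induce W').neighborFinset u').image Subtype.val).card := by
      rw [Finset.card_image_of_injective _ Subtype.val_injective]
      have := hreg u'
      rw [← card_neighborFinset_eq_degree] at this
      rw [this, ← hdeg u hu, card_neighborFinset_eq_degree]
    have heq := Finset.eq_of_subset_of_card_le hS hcard
    have hwmem : w ∈ G.neighborFinset u := by rwa [mem_neighborFinset]
    rw [← heq] at hwmem
    simp only [Finset.mem_image] at hwmem
    obtain ⟨⟨y, hy⟩, _, rfl⟩ := hwmem
    exact hy
  obtain ⟨v0, hv0W, hv0W'⟩ := hinter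
  intro w hw
  have hreach := hWconn ⟨v0, hv0W⟩ ⟨w, hw⟩
  obtain ⟨p⟩ := hreach
  -- induct on walk
  have : ∀ (a b : W) (_ : SimpleGraph.Walk (G.induce W) a b), (a : V) ∈ W' → (b : V) ∈ W' := by
    intro a b p
    induction p with
    | nil => exact fun h => h
    | cons h p ih =>
      intro ha
      exact ih (key _ (by exact Subtype.coe_prop _) ha _ h)
  exact this _ _ p hv0W'
end

section
/- Let H be a connected graph with minimum degree at least 3. Then there exists a set V' of 3 vertices in H such that H[V'] is isomorphic to P₃ (path on 3 vertices) or K₃ (triangle), and the induced subgraph H[V(H) \ V'] is connected. -/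
open SimpleGraph

attribute [local instance] Classical.propDecidable

open Function

set_option linter.unusedSectionVars false
set_option maxHeartbeats 1000000

namespace Stmt5Aux

variable {V : Type*} [Fintype V] {H : SimpleGraph V} {r : V} {p : V → V}

def Valid (H : SimpleGraph V) (r : V) (p : V → V) : Prop :=
  p r = r ∧ (∀ v, v ≠ r → H.Adj v (p v)) ∧ (∀ v, ∃ n, p^[n] v = r)

noncomputable def dep (r : V) (p : V → V) (v : V) : ℕ := sInf {n | p^[n] v = r}

lemma iter_r (h : p r = r) : ∀ n, p^[n] r = r := by
  intro n; induction n with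
  | zero => rfl
  | succ n ih => rw [Function.iterate_succ_apply', ih, h]

lemma dep_spec (hp : Valid H r p) (v : V) : p^[dep r p v] v = r :=
  Nat.sInf_mem (hp.2.2 v)

lemma dep_le {v : V} {k : ℕ} (h : p^[k] v = r) : dep r p v ≤ k :=
  Nat.sInf_le h

lemma dep_min {v : V} {k : ℕ} (h : k < dep r p v) : p^[k] v ≠ r :=
  Nat.notMem_of_lt_sInf h

lemma dep_eq_zero_iff (hp : Valid H r p) {v : V} : dep r p v = 0 ↔ v = r := by
  constructor
  · intro h
    have := dep_spec hp v
    rwa [h] at this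
  · rintro rfl
    exact Nat.le_zero.mp (dep_le (by rfl))

lemma dep_succ (hp : Valid H r p) {v : V} (hv : v ≠ r) :
    dep r p v = dep r p (p v) + 1 := by
  have h1 : 1 ≤ dep r p v := by
    rcases Nat.eq_zero_or_pos (dep r p v) with h | h
    · exact absurd ((dep_eq_zero_iff hp).mp h) hv
    · exact h
  refine le_antisymm (dep_le ?_) ?_
  · rw [Function.iterate_succ_apply]
    exact dep_spec hp (p v)
  · have : p^[dep r p v] v = r := dep_spec hp v
    obtain ⟨m, hm⟩ := Nat.exists_eq_add_of_le h1
    rw [hm, add_comm, Function.iterate_succ_apply] at this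
    have := dep_le this
    omega

lemma dep_iterate (hp : Valid H r p) :
    ∀ (k : ℕ) (v : V), k ≤ dep r p v → dep r p (p^[k] v) = dep r p v - k := by
  intro k
  induction k with
  | zero => intro v _; simp
  | succ k ih =>
    intro v h
    have hv : v ≠ r := by
      intro h'; subst h'
      rw [(dep_eq_zero_iff hp).mpr rfl] at h; omega
    have hs := dep_succ hp hv
    rw [Function.iterate_succ_apply, ih (p v) (by omega)]
    omega

lemma iter_eq_r (hp : Valid H r p) {v : V} {k : ℕ} (h : dep r p v ≤ k) :
    p^[k] v = r := by
  obtain ⟨m, hm⟩ := Nat.exists_eq_add_of_le h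
  rw [hm, add_comm, Function.iterate_add_apply, dep_spec hp, iter_r hp.1]

lemma desc_dep (hp : Valid H r p) {z a : V} {k : ℕ} (h : p^[k] z = a) (ha : a ≠ r) :
    dep r p z = dep r p a + k := by
  have hk : k ≤ dep r p z := by
    by_contra h'
    exact ha (h ▸ iter_eq_r hp (by omega))
  have := dep_iterate hp k z hk
  rw [h] at this
  omega

lemma dep_iter_le (hp : Valid H r p) (a : V) (i : ℕ) : dep r p (p^[i] a) ≤ dep r p a := by
  rcases le_or_gt i (dep r p a) with h | h
  · rw [dep_iterate hp i a h]; omega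
  · rw [iter_eq_r hp (by omega), (dep_eq_zero_iff hp).mpr rfl]; omega


lemma exists_valid (hconn : H.Connected) (r : V) : ∃ p, Valid H r p := by
  have step : ∀ v, v ≠ r → ∃ a, H.Adj v a ∧ H.dist a r < H.dist v r := by
    intro v hv
    have hd : 0 < H.dist v r := hconn.pos_dist_of_ne hv
    obtain ⟨w, hw⟩ := hconn.exists_walk_length_eq_dist v r
    cases w with
    | nil => exact absurd rfl hv
    | cons h w' =>
      refine ⟨_, h, ?_⟩
      have := SimpleGraph.dist_le w'
      simp only [Walk.length_cons] at hw
      omega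
  classical
  refine ⟨fun v => if hv : v = r then r else Classical.choose (step v hv), ?_, ?_, ?_⟩
  · simp
  · intro v hv
    simp only [dif_neg hv]
    exact (Classical.choose_spec (step v hv)).1
  · intro v
    set p : V → V := fun v => if hv : v = r then r else Classical.choose (step v hv) with hpdef
    suffices h : ∀ m v, H.dist v r ≤ m → ∃ n, p^[n] v = r by
      exact h (H.dist v r) v le_rfl
    intro m
    induction m with
    | zero =>
      intro v hv
      have : v = r := hconn.dist_eq_zero_iff.mp (by omega)
      exact ⟨0, this⟩
    | succ m ih =>
      intro v hv
      by_cases hvr : v = r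
      · exact ⟨0, hvr⟩
      · have hpv : p v = Classical.choose (step v hvr) := by simp [hpdef, dif_neg hvr]
        have hspec := Classical.choose_spec (step v hvr)
        obtain ⟨n, hn⟩ := ih (p v) (by rw [hpv]; omega)
        exact ⟨n + 1, by rwa [Function.iterate_succ_apply]⟩


lemma agree_iterate {f g : V → V} {y : V} (hfg : ∀ z, z ≠ y → f z = g z) (v : V) :
    ∀ n, (∀ i, i < n → f^[i] v ≠ y) → f^[n] v = g^[n] v := by
  intro n
  induction n with
  | zero => intro _; rfl
  | succ n ih =>
    intro h
    have h' : ∀ i, i < n → f^[i] v ≠ y := fun i hi => h i (by omega)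
    have hne : f^[n] v ≠ y := h n (by omega)
    rw [Function.iterate_succ_apply', Function.iterate_succ_apply', hfg _ hne, ih h']

noncomputable def wt (r : V) (p : V → V) : ℕ := ∑ v, dep r p v

lemma exists_max (hconn : H.Connected) (r : V) :
    ∃ p, Valid H r p ∧ ∀ q, Valid H r q → wt r q ≤ wt r p := by
  classical
  obtain ⟨p₀, hp₀⟩ := exists_valid hconn r
  obtain ⟨p, hmem, hmax⟩ := Finset.exists_max_image
    (Finset.univ.filter (Valid H r)) (wt r) ⟨p₀, by simp [hp₀]⟩
  refine ⟨p, by simpa using hmem, fun q hq => hmax q (by simp [hq])⟩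

lemma first_hit {q : V → V} {w y : V} {i : ℕ} (hiy : q^[i] w = y) :
    ∃ j, q^[j] w = y ∧ (∀ i', i' < j → q^[i'] w ≠ y) ∧ j ≤ i := by
  have hmem : sInf {i | q^[i] w = y} ∈ {i | q^[i] w = y} := Nat.sInf_mem ⟨i, hiy⟩
  exact ⟨_, hmem, fun i' hi' => Nat.notMem_of_lt_sInf hi', Nat.sInf_le hiy⟩

lemma anc_aux (hp : Valid H r p) (hmax : ∀ q, Valid H r q → wt r q ≤ wt r p)
    {x y : V} (hadj : H.Adj x y) (hd : dep r p y ≤ dep r p x)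
    (hx : ∀ k, p^[k] x ≠ y) : False := by
  classical
  have hyr : y ≠ r := fun h => hx (dep r p x) (h ▸ dep_spec hp x)
  set p' := Function.update p y x with hp'
  have hp'y : p' y = x := Function.update_self y x p
  have hagree : ∀ z, z ≠ y → p z = p' z := fun z hz =>
    (Function.update_of_ne hz x p).symm
  have hagree' : ∀ z, z ≠ y → p' z = p z := fun z hz => (hagree z hz).symm
  have hxa : ∀ n, p^[n] x = p'^[n] x := fun n =>
    agree_iterate hagree x n (fun i _ => hx i)
  have hx' : p'^[dep r p x] x = r := by rw [← hxa]; exact dep_spec hp x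
  have hy' : p'^[dep r p x + 1] y = r := by
    rw [Function.iterate_succ_apply, hp'y]; exact hx'
  have hvalid' : Valid H r p' := by
    refine ⟨?_, ?_, ?_⟩
    · rw [hagree' r (Ne.symm hyr)]; exact hp.1
    · intro w hw
      by_cases hwy : w = y
      · subst hwy; rw [hp'y]; exact hadj.symm
      · rw [hagree' w hwy]; exact hp.2.1 w hw
    · intro w
      by_cases h : ∀ i, i < dep r p w → p^[i] w ≠ y
      · exact ⟨dep r p w, by rw [← agree_iterate hagree w _ h]; exact dep_spec hp w⟩
      · push_neg at h
        obtain ⟨i, hi, hiy⟩ := h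
        obtain ⟨j, hjmem, hjmin, hjle⟩ := first_hit hiy
        have hj' : p'^[j] w = y := by rw [← agree_iterate hagree w j hjmin]; exact hjmem
        refine ⟨(dep r p x + 1) + j, ?_⟩
        rw [Function.iterate_add_apply, hj', hy']
  have hdep'y : dep r p' y = dep r p x + 1 := by
    refine le_antisymm (dep_le hy') ?_
    have hm := dep_spec hvalid' y
    have hm1 : 1 ≤ dep r p' y := by
      rcases Nat.eq_zero_or_pos (dep r p' y) with h | h
      · exact absurd ((dep_eq_zero_iff hvalid').mp h) hyr
      · exact h
    obtain ⟨m', hm'⟩ : ∃ m', dep r p' y = m' + 1 := ⟨dep r p' y - 1, by omega⟩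
    rw [hm', Function.iterate_succ_apply, hp'y, ← hxa] at hm
    have := dep_le hm
    omega
  have key2 : ∀ w, dep r p w ≤ dep r p' w := by
    intro w
    have hnr : p'^[dep r p' w] w = r := dep_spec hvalid' w
    by_cases h : ∀ i, i < dep r p' w → p'^[i] w ≠ y
    · refine dep_le ?_
      rw [← agree_iterate hagree' w _ h]; exact hnr
    · push_neg at h
      obtain ⟨i, hi, hiy⟩ := h
      obtain ⟨j, hjmem, hjmin, hjle⟩ := first_hit hiy
      have hpj : p^[j] w = y := by rw [← agree_iterate hagree' w j hjmin]; exact hjmem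
      have h2 : dep r p w ≤ j + dep r p y := dep_le (by
        rw [add_comm, Function.iterate_add_apply, hpj]; exact dep_spec hp y)
      have h3 : j + dep r p' y ≤ dep r p' w := by
        obtain ⟨m, hm⟩ : ∃ m, dep r p' w = j + m := ⟨dep r p' w - j, by omega⟩
        have hmy : p'^[m] y = r := by
          rw [← hjmem, ← Function.iterate_add_apply, add_comm, ← hm]
          exact hnr
        have := dep_le hmy
        omega
      omega
  have key3 : dep r p y < dep r p' y := by omega
  have hlt : wt r p < wt r p' :=
    Finset.sum_lt_sum (fun i _ => key2 i) ⟨y, Finset.mem_univ y, key3⟩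
  exact absurd (hmax p' hvalid') (by omega)

lemma anc_of_max (hp : Valid H r p) (hmax : ∀ q, Valid H r q → wt r q ≤ wt r p)
    {x y : V} (hadj : H.Adj x y) : (∃ k, p^[k] x = y) ∨ (∃ k, p^[k] y = x) := by
  by_contra h
  push_neg at h
  rcases le_total (dep r p y) (dep r p x) with hd | hd
  · exact anc_aux hp hmax hadj hd (fun k => h.1 k)
  · exact anc_aux hp hmax hadj.symm hd (fun k => h.2 k)



lemma nbr_anc (hp : Valid H r p) (hmax : ∀ q, Valid H r q → wt r q ≤ wt r p)
    {z a : V} (hz : ∀ w, dep r p w ≤ dep r p z) (hadj : H.Adj z a) :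
    ∃ k, 1 ≤ k ∧ k ≤ dep r p z ∧ p^[k] z = a := by
  rcases anc_of_max hp hmax hadj with ⟨k, hk⟩ | ⟨k, hk⟩
  · have hk1 : 1 ≤ k := by
      rcases Nat.eq_zero_or_pos k with h | h
      · subst h; simp only [Function.iterate_zero_apply] at hk
        exact absurd hk hadj.ne
      · exact h
    by_cases hkd : k ≤ dep r p z
    · exact ⟨k, hk1, hkd, hk⟩
    · have har : a = r := by rw [← hk]; exact iter_eq_r hp (by omega)
      have hdz : 1 ≤ dep r p z := by
        by_contra h
        have hzr : z = r := (dep_eq_zero_iff hp).mp (by omega)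
        exact hadj.ne (hzr.trans har.symm)
      exact ⟨dep r p z, hdz, le_rfl, by rw [har]; exact dep_spec hp z⟩
  · exfalso
    have hk0 : k ≠ 0 := by
      intro h; subst h; simp only [Function.iterate_zero_apply] at hk
      exact hadj.ne' hk
    by_cases hkd : k ≤ dep r p a
    · have hd := dep_iterate hp k a hkd
      rw [hk] at hd
      have := hz a
      omega
    · have hzr : z = r := by rw [← hk]; exact iter_eq_r hp (by omega)
      have h0 : dep r p z = 0 := (dep_eq_zero_iff hp).mpr hzr
      have := hz a
      have har : a = r := (dep_eq_zero_iff hp).mp (by omega)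
      exact hadj.ne (hzr.trans har.symm)

lemma small (hp : Valid H r p) (hmax : ∀ q, Valid H r q → wt r q ≤ wt r p)
    {z : V} (hz : ∀ w, dep r p w ≤ dep r p z) (hdeg : 3 ≤ H.degree z) :
    ∃ a, H.Adj z a ∧ dep r p a + 3 ≤ dep r p z := by
  classical
  have hanc : ∀ a ∈ H.neighborFinset z,
      p^[dep r p z - dep r p a] z = a ∧ dep r p a < dep r p z := by
    intro a ha
    rw [SimpleGraph.mem_neighborFinset] at ha
    obtain ⟨k, hk1, hk2, hk⟩ := nbr_anc hp hmax hz ha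
    have hd := dep_iterate hp k z hk2
    rw [hk] at hd
    have hkk : dep r p z - dep r p a = k := by omega
    exact ⟨by rw [hkk]; exact hk, by omega⟩
  by_contra hcon
  push_neg at hcon
  have hinj : Set.InjOn (dep r p) (H.neighborFinset z) := by
    intro a ha b hb hab
    have h1 := hanc a ha
    have h2 := hanc b hb
    rw [← h1.1, ← h2.1, hab]
  have hcard : 3 ≤ ((H.neighborFinset z).image (dep r p)).card := by
    rw [Finset.card_image_of_injOn hinj, SimpleGraph.card_neighborFinset_eq_degree]
    exact hdeg
  have hsub : (H.neighborFinset z).image (dep r p) ⊆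
      {dep r p z - 1, dep r p z - 2} := by
    intro m hm
    simp only [Finset.mem_image] at hm
    obtain ⟨a, ha, rfl⟩ := hm
    have h1 := (hanc a ha).2
    have h2 := hcon a (by rwa [SimpleGraph.mem_neighborFinset] at ha)
    simp only [Finset.mem_insert, Finset.mem_singleton]
    omega
  have hc1 := Finset.card_le_card hsub
  have hc2 : ({dep r p z - 1, dep r p z - 2} : Finset ℕ).card ≤ 2 :=
    (Finset.card_insert_le _ _).trans (by simp)
  omega

lemma reach_up (hp : Valid H r p) (S : Set V) (hr : r ∈ Sᶜ) :
    ∀ n, ∀ z, dep r p z ≤ n → ∀ (hz : ∀ i, p^[i] z ∉ S),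
      (H.induce Sᶜ).Reachable ⟨z, hz 0⟩ ⟨r, hr⟩ := by
  intro n
  induction n with
  | zero =>
    intro z hn hz
    have hzr : z = r := (dep_eq_zero_iff hp).mp (by omega)
    subst hzr
    exact Reachable.refl _
  | succ n ih =>
    intro z hn hz
    by_cases hzr : z = r
    · subst hzr; exact Reachable.refl _
    · have hadj : (H.induce Sᶜ).Adj ⟨z, hz 0⟩ ⟨p z, hz 1⟩ := by
        simpa using hp.2.1 z hzr
      have hdz : dep r p (p z) ≤ n := by have := dep_succ hp hzr; omega
      exact hadj.reachable.trans
        (ih (p z) hdz (fun i => (Function.iterate_succ_apply p i z) ▸ hz (i + 1)))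

lemma iso3 (H : SimpleGraph V) {a b c : V} (hab : a ≠ b) (hac : a ≠ c) (hbc : b ≠ c)
    (h1 : H.Adj a b) (h2 : H.Adj b c) :
    Nonempty ((H.induce (({a, b, c} : Finset V) : Set V)) ≃g pathGraph 3) ∨
    Nonempty ((H.induce (({a, b, c} : Finset V) : Set V)) ≃g (⊤ : SimpleGraph (Fin 3))) := by
  classical
  set S : Set V := (({a, b, c} : Finset V) : Set V) with hS
  have hmem : ∀ x : S, x.1 = a ∨ x.1 = b ∨ x.1 = c := by
    rintro ⟨x, hx⟩
    simpa [hS] using hx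
  have ha : a ∈ S := by simp [hS]
  have hb : b ∈ S := by simp [hS]
  have hc : c ∈ S := by simp [hS]
  let e : S ≃ Fin 3 :=
    { toFun := fun x => if x.1 = a then 0 else if x.1 = b then 1 else 2
      invFun := fun i => if i = 0 then ⟨a, ha⟩ else if i = 1 then ⟨b, hb⟩ else ⟨c, hc⟩
      left_inv := by
        intro x
        rcases hmem x with h | h | h <;>
          (apply Subtype.ext;
           simp [h, hab, hac, hbc, hab.symm, hac.symm, hbc.symm])
      right_inv := by
        intro i
        fin_cases i <;> simp [hab, hac, hbc, hab.symm, hac.symm, hbc.symm] }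
  have hval : ∀ x : S, (x.1 = a ∧ e x = 0) ∨ (x.1 = b ∧ e x = 1) ∨ (x.1 = c ∧ e x = 2) := by
    intro x
    rcases hmem x with h | h | h
    · exact Or.inl ⟨h, by simp [e, h]⟩
    · exact Or.inr (Or.inl ⟨h, by simp [e, h, hab.symm]⟩)
    · exact Or.inr (Or.inr ⟨h, by simp [e, h, hac.symm, hbc.symm]⟩)
  by_cases h3 : H.Adj a c
  · right
    refine ⟨⟨e, ?_⟩⟩
    rintro x y
    rcases hval x with ⟨hx, hex⟩ | ⟨hx, hex⟩ | ⟨hx, hex⟩ <;>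
      rcases hval y with ⟨hy, hey⟩ | ⟨hy, hey⟩ | ⟨hy, hey⟩ <;>
      simp_all [SimpleGraph.top_adj, SimpleGraph.comap_adj, h1, h2, h3,
        h1.symm, h2.symm, h3.symm, hab, hac, hbc]
  · left
    have h3' : ¬H.Adj c a := fun h => h3 (H.adj_symm h)
    refine ⟨⟨e, ?_⟩⟩
    rintro x y
    rcases hval x with ⟨hx, hex⟩ | ⟨hx, hex⟩ | ⟨hx, hex⟩ <;>
      rcases hval y with ⟨hy, hey⟩ | ⟨hy, hey⟩ | ⟨hy, hey⟩ <;>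
      simp_all [SimpleGraph.pathGraph_adj, SimpleGraph.comap_adj, h1, h2, h3,
        h1.symm, h2.symm, hab, hac, hbc, h3']


lemma first_hit' {q : V → V} {w : V} {P : V → Prop} {i : ℕ} (h : P (q^[i] w)) :
    ∃ j, P (q^[j] w) ∧ (∀ i', i' < j → ¬P (q^[i'] w)) ∧ j ≤ i := by
  classical
  have hmem : sInf {i | P (q^[i] w)} ∈ {i | P (q^[i] w)} := Nat.sInf_mem ⟨i, h⟩
  exact ⟨_, hmem, fun i' hi' => Nat.notMem_of_lt_sInf hi', Nat.sInf_le h⟩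

lemma avoid (hp : Valid H r p) {S : Set V} {a : V} {D : ℕ}
    (hd : ∀ s ∈ S, D ≤ dep r p s + 2) (ha : dep r p a + 3 ≤ D) :
    ∀ i, p^[i] a ∉ S := by
  intro i hi
  have h1 := hd _ hi
  have h2 := dep_iter_le hp a i
  omega

lemma esc (hp : Valid H r p) {S : Set V} (hr : r ∈ Sᶜ) {z a : V} (hz : z ∈ Sᶜ)
    (hadj : H.Adj z a) (ha : ∀ i, p^[i] a ∉ S) :
    (H.induce Sᶜ).Reachable ⟨z, hz⟩ ⟨r, hr⟩ := by
  have hadj' : (H.induce Sᶜ).Adj ⟨z, hz⟩ ⟨a, ha 0⟩ := by simpa using hadj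
  exact hadj'.reachable.trans (reach_up hp S hr (dep r p a) a le_rfl ha)

end Stmt5Aux


theorem stmt5 {V : Type*} [Fintype V] (H : SimpleGraph V) (hconn : H.Connected)
    (hmin : ∀ v, 3 ≤ H.degree v) :
    ∃ V' : Finset V, V'.card = 3 ∧
      (Nonempty ((H.induce (V' : Set V)) ≃g pathGraph 3) ∨
       Nonempty ((H.induce (V' : Set V)) ≃g (⊤ : SimpleGraph (Fin 3)))) ∧
      (H.induce ((V' : Set V)ᶜ)).Connected := by
  classical
  open Stmt5Aux in
  obtain ⟨r⟩ := hconn.nonempty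
  obtain ⟨p, hp, hmax⟩ := Stmt5Aux.exists_max hconn r
  obtain ⟨v, -, hv'⟩ := Finset.exists_max_image Finset.univ (Stmt5Aux.dep r p)
    ⟨r, Finset.mem_univ r⟩
  have hv : ∀ w, dep r p w ≤ dep r p v := fun w => hv' w (Finset.mem_univ w)
  obtain ⟨a₀, ha₀, ha₀d⟩ := Stmt5Aux.small hp hmax hv (hmin v)
  have hD3 : 3 ≤ dep r p v := by omega
  have hvr : v ≠ r := by
    intro h
    rw [(dep_eq_zero_iff hp).mpr h] at hD3
    omega
  have hvu : H.Adj v (p v) := hp.2.1 v hvr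
  have hdu : dep r p v = dep r p (p v) + 1 := dep_succ hp hvr
  have hur : p v ≠ r := by
    intro h
    rw [(dep_eq_zero_iff hp).mpr h] at hdu
    omega
  -- abbreviations
  set D := dep r p v with hD
  set u := p v with hu
  by_cases hcase : ∃ c, c ≠ v ∧ c ≠ r ∧ p c = u
  · -- Case 1 : u has another child c
    obtain ⟨c, hcv, hcr, hpc⟩ := hcase
    have hdc : dep r p c = D := by
      have := dep_succ hp hcr
      rw [hpc] at this
      omega
    have hvune : v ≠ u := by intro h; rw [← h] at hdu; omega
    have hcune : c ≠ u := by intro h; rw [← h, hdc] at hdu; omega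
    refine ⟨{v, u, c}, ?_, ?_, ?_⟩
    · rw [Finset.card_insert_of_notMem (by simp [hvune, hcv.symm]),
        Finset.card_insert_of_notMem (by simp [hcune.symm]), Finset.card_singleton]
    · exact iso3 H hvune (Ne.symm hcv) (Ne.symm hcune) hvu (SimpleGraph.Adj.symm (hpc ▸ hp.2.1 c hcr))
    · -- connectivity of the complement (Case 1)
      set S : Set V := (({v, u, c} : Finset V) : Set V) with hSdef
      have hmemS : ∀ x, x ∈ S ↔ x = v ∨ x = u ∨ x = c := by intro x; simp [hSdef]
      have hdepS : ∀ s ∈ S, D ≤ dep r p s + 2 := by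
        intro s hs
        rcases (hmemS s).mp hs with rfl | rfl | rfl
        · omega
        · omega
        · rw [hdc]; omega
      have hrS : r ∈ Sᶜ := by
        intro h
        rcases (hmemS r).mp h with h | h | h
        · exact hvr h.symm
        · exact hur h.symm
        · exact hcr h.symm
      have main : ∀ z (hz : z ∈ Sᶜ), (H.induce Sᶜ).Reachable ⟨z, hz⟩ ⟨r, hrS⟩ := by
        intro z hz
        by_cases htraj : ∀ i, p^[i] z ∉ S
        · exact reach_up hp S hrS (dep r p z) z le_rfl htraj
        · push_neg at htraj
          obtain ⟨i, hi⟩ := htraj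
          obtain ⟨j, hjS, hjmin, -⟩ := first_hit' (P := (· ∈ S)) hi
          have hj1 : 1 ≤ j := by
            rcases Nat.eq_zero_or_pos j with h | h
            · exfalso; rw [h] at hjS; exact hz hjS
            · exact h
          have hvz := hv z
          rcases (hmemS _).mp hjS with hj | hj | hj
          · exfalso
            have h1 := desc_dep hp hj hvr
            omega
          · have hdz := desc_dep hp hj hur
            have hdzD : dep r p z = D := by omega
            have hzmax : ∀ w, dep r p w ≤ dep r p z := by
              intro w; rw [hdzD]; exact hv w
            obtain ⟨a, haz, had⟩ := small hp hmax hzmax (hmin z)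
            exact esc hp hrS hz haz (avoid hp hdepS (by omega))
          · exfalso
            have h1 := desc_dep hp hj hcr
            rw [hdc] at h1
            omega
      refine (SimpleGraph.connected_iff _).mpr ⟨?_, ⟨⟨r, hrS⟩⟩⟩
      intro x y
      exact (main x.1 x.2).trans (main y.1 y.2).symm
  · -- Case 2: v is the only child of u
    have hnc : ∀ z, p z = u → z = v := by
      intro z hz
      by_contra hzv
      by_cases hzr : z = r
      · subst hzr; rw [hp.1] at hz; exact hur hz.symm
      · exact hcase ⟨z, hzv, hzr, hz⟩
    set w := p u with hw
    have huw : H.Adj u w := hp.2.1 u hur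
    have hduw : dep r p u = dep r p w + 1 := dep_succ hp hur
    have hwr : w ≠ r := by
      intro h
      rw [(dep_eq_zero_iff hp).mpr h] at hduw
      omega
    have hvune : v ≠ u := by intro h; rw [← h] at hdu; omega
    have huwne : u ≠ w := by intro h; rw [← h] at hduw; omega
    have hvwne : v ≠ w := by
      intro h
      have : dep r p v = dep r p w := by rw [h]
      omega
    refine ⟨{v, u, w}, ?_, ?_, ?_⟩
    · rw [Finset.card_insert_of_notMem (by simp [hvune, hvwne]),
        Finset.card_insert_of_notMem (by simp [huwne]), Finset.card_singleton]
    · exact iso3 H hvune hvwne huwne hvu huw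
    · set S : Set V := (({v, u, w} : Finset V) : Set V) with hSdef
      have hmemS : ∀ x, x ∈ S ↔ x = v ∨ x = u ∨ x = w := by intro x; simp [hSdef]
      have hvS : v ∈ S := by rw [hmemS]; tauto
      have huS : u ∈ S := by rw [hmemS]; tauto
      have hwS : w ∈ S := by rw [hmemS]; tauto
      have hdepS : ∀ s ∈ S, D ≤ dep r p s + 2 := by
        intro s hs
        rcases (hmemS s).mp hs with rfl | rfl | rfl
        · omega
        · omega
        · omega
      have hrS : r ∈ Sᶜ := by
        intro h
        rcases (hmemS r).mp h with h | h | h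
        · exact hvr h.symm
        · exact hur h.symm
        · exact hwr h.symm
      have main : ∀ z (hz : z ∈ Sᶜ), (H.induce Sᶜ).Reachable ⟨z, hz⟩ ⟨r, hrS⟩ := by
        intro z hz
        by_cases htraj : ∀ i, p^[i] z ∉ S
        · exact reach_up hp S hrS (dep r p z) z le_rfl htraj
        · push_neg at htraj
          obtain ⟨i, hi⟩ := htraj
          obtain ⟨j, hjS, hjmin, -⟩ := first_hit' (P := (· ∈ S)) hi
          have hj1 : 1 ≤ j := by
            rcases Nat.eq_zero_or_pos j with h | h
            · exfalso; rw [h] at hjS; exact hz hjS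
            · exact h
          have hvz := hv z
          rcases (hmemS _).mp hjS with hj | hj | hj
          · exfalso
            have h1 := desc_dep hp hj hvr
            omega
          · exfalso
            have h1 := desc_dep hp hj hur
            have hj1' : j = 1 := by omega
            rw [hj1', Function.iterate_one] at hj
            have := hnc z hj
            rw [this] at hz
            exact hz hvS
          · have h1 := desc_dep hp hj hwr
            have hj2 : j = 1 ∨ j = 2 := by omega
            rcases hj2 with hj1' | hj2'
            · -- z is a child of w other than u, depth D - 1
              rw [hj1', Function.iterate_one] at hj
              have hdz : dep r p z = D - 1 := by omega
              have hzr' : z ≠ r := by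
                intro h
                rw [(dep_eq_zero_iff hp).mpr h] at hdz
                omega
              by_cases hesc : ∃ a, H.Adj z a ∧ dep r p a + 3 ≤ D
              · obtain ⟨a, haz, had⟩ := hesc
                exact esc hp hrS hz haz (avoid hp hdepS had)
              · push_neg at hesc
                -- every neighbor of z is w or a child of z; pick a child y
                have hchild : ∃ y, H.Adj z y ∧ p y = z := by
                  have hex : ∃ y ∈ H.neighborFinset z, y ≠ w := by
                    by_contra hcon
                    push_neg at hcon
                    have hsub : H.neighborFinset z ⊆ {w} :=
                      fun t ht => Finset.mem_singleton.mpr (hcon t ht)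
                    have h2 := Finset.card_le_card hsub
                    have h1 := hmin z
                    rw [← SimpleGraph.card_neighborFinset_eq_degree] at h1
                    simp only [Finset.card_singleton] at h2
                    omega
                  obtain ⟨y, hy, hyw⟩ := hex
                  rw [SimpleGraph.mem_neighborFinset] at hy
                  have hyz := hy
                  rcases anc_of_max hp hmax hyz with ⟨k, hk⟩ | ⟨k, hk⟩
                  · exfalso
                    have hk0 : k ≠ 0 := by
                      intro h; rw [h, Function.iterate_zero_apply] at hk
                      exact H.irrefl (hk ▸ hyz)
                    by_cases hkd : k ≤ dep r p z
                    · have hdky := dep_iterate hp k z hkd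
                      rw [hk] at hdky
                      have h3 := hesc _ hyz
                      have hk1 : k = 1 := by omega
                      rw [hk1, Function.iterate_one] at hk
                      exact hyw (hk.symm.trans hj)
                    · have hyr : y = r := by rw [← hk]; exact iter_eq_r hp (by omega)
                      have h4 := hesc _ hyz
                      rw [hyr, (dep_eq_zero_iff hp).mpr rfl] at h4
                      omega
                  · have hk0 : k ≠ 0 := by
                      intro h; rw [h, Function.iterate_zero_apply] at hk
                      exact H.irrefl (hk ▸ hyz)
                    have h5 := desc_dep hp hk hzr'
                    have hvy := hv y
                    have hk1 : k = 1 := by omega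
                    rw [hk1, Function.iterate_one] at hk
                    exact ⟨y, hyz, hk⟩
                obtain ⟨y, hyz, hpy⟩ := hchild
                have hyr' : y ≠ r := by
                  intro h
                  rw [h, hp.1] at hpy
                  exact hzr' hpy.symm
                have hdy : dep r p y = D := by
                  have := dep_succ hp hyr'
                  rw [hpy] at this
                  omega
                have hyS : y ∈ Sᶜ := by
                  intro hymem
                  rcases (hmemS y).mp hymem with h | h | h
                  · rw [h] at hpy
                    exact hz (by rw [← hpy]; exact huS)
                  · rw [h] at hdy; omega
                  · rw [h] at hdy; omega
                have hymax : ∀ w', dep r p w' ≤ dep r p y := by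
                  intro w'; rw [hdy]; exact hv w'
                obtain ⟨b, hyb, hbd⟩ := small hp hmax hymax (hmin y)
                have hreach : (H.induce Sᶜ).Reachable ⟨y, hyS⟩ ⟨r, hrS⟩ :=
                  esc hp hrS hyS hyb (avoid hp hdepS (by omega))
                have hadj' : (H.induce Sᶜ).Adj ⟨z, hz⟩ ⟨y, hyS⟩ := by simpa using hyz
                exact hadj'.reachable.trans hreach
            · -- j = 2 : z has depth D
              have hdzD : dep r p z = D := by omega
              have hzmax : ∀ w', dep r p w' ≤ dep r p z := by
                intro w'; rw [hdzD]; exact hv w'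
              obtain ⟨a, haz, had⟩ := small hp hmax hzmax (hmin z)
              exact esc hp hrS hz haz (avoid hp hdepS (by omega))
      refine (SimpleGraph.connected_iff _).mpr ⟨?_, ⟨⟨r, hrS⟩⟩⟩
      intro x y
      exact (main x.1 x.2).trans (main y.1 y.2).symm
end

section
/- Let G be a graph formed as follows: take k + 1 disjoint copies H₁, ..., H_{k+1} of a connected graph H, and add all edges between every pair of vertices lying in distinct copies. If H has at least one edge, then G contains no induced subgraph isomorphic to the disjoint union of two copies of H (i.e., G is 2H-free). -/
open SimpleGraph

attribute [local instance] Classical.propDecidable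

theorem stmt8 {V : Type*} [Fintype V] (H : SimpleGraph V) (hconn : H.Connected)
    (hedge : ∃ u v, H.Adj u v) (k : ℕ)
    (G : SimpleGraph (V × Fin (k + 1)))
    (hG : ∀ p q, G.Adj p q ↔ (p.2 = q.2 ∧ H.Adj p.1 q.1) ∨ p.2 ≠ q.2) :
    ¬ ∃ U : Set (V × Fin (k + 1)), Nonempty ((G.induce U) ≃g (H ⊕g H)) := by
  rintro ⟨U, ⟨φ⟩⟩
  obtain ⟨u₀, v₀, huv⟩ := hedge
  -- ψ sends a vertex of H ⊕g H to its preimage in U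
  set ψ : V ⊕ V → (V × Fin (k + 1)) := fun a => (φ.symm a : U) with hψ
  have hmem : ∀ a, ψ a ∈ U := fun a => (φ.symm a).2
  have hadj : ∀ a b, (H ⊕g H).Adj a b ↔ G.Adj (ψ a) (ψ b) := by
    intro a b
    rw [← φ.symm.map_adj_iff]
    rfl
  have hinj : Function.Injective ψ := by
    intro a b hab
    have : φ.symm a = φ.symm b := Subtype.ext hab
    exact φ.symm.injective this
  -- every left vertex has the same Fin index as ψ (Sum.inr u₀)
  have hsame : ∀ w : V, (ψ (Sum.inl w)).2 = (ψ (Sum.inr u₀)).2 := by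
    intro w
    have hne : ψ (Sum.inl w) ≠ ψ (Sum.inr u₀) := fun h => by
      have := hinj h; simp at this
    have hnadj : ¬ G.Adj (ψ (Sum.inl w)) (ψ (Sum.inr u₀)) := by
      rw [← hadj]; simp
    rw [hG] at hnadj
    push_neg at hnadj
    exact hnadj.2
  -- the left map into V is injective, hence surjective
  have hlinj : Function.Injective (fun w : V => (ψ (Sum.inl w)).1) := by
    intro a b hab
    have : ψ (Sum.inl a) = ψ (Sum.inl b) := by
      apply Prod.ext hab
      rw [hsame a, hsame b]
    have := hinj this
    simpa using this
  have hsurj : Function.Surjective (fun w : V => (ψ (Sum.inl w)).1) :=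
    Finite.surjective_of_injective hlinj
  obtain ⟨w, hw⟩ := hsurj (ψ (Sum.inr u₀)).1
  have : ψ (Sum.inl w) = ψ (Sum.inr u₀) := Prod.ext hw (hsame w)
  have := hinj this
  simp at this
end

section
/- Let H be a connected graph with minimum degree d > 2, let V' ⊆ V(H) induce a connected subgraph on d vertices, and suppose H \ V' is disconnected with components on vertex sets V₁, ..., V_t (t > 1), where V₁ has the maximum number of vertices among them. If some component Vⱼ (j ≥ 2) had more than d − 1 vertices, then Vⱼ would contain a connected induced subgraph on d vertices whose removal from H leaves a component containing V₁ ∪ V'. Consequently, every component of H \ V' other than a largest one has at most d − 1 vertices, under the assumption that every d-vertex connected induced subgraph's removal disconnects H with largest component at most |V₁|. -/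
open SimpleGraph

attribute [local instance] Classical.propDecidable

section aux
variable {V : Type*} {G : SimpleGraph V}

lemma walk_transfer {A B : Set V} : ∀ {a b : ↥A} (p : (G.induce A).Walk a b)
    (h : ∀ x ∈ p.support, ↑x ∈ B),
    (G.induce B).Reachable ⟨a, h a p.start_mem_support⟩ ⟨b, h b p.end_mem_support⟩
  | a, _, SimpleGraph.Walk.nil, h => Reachable.refl _
  | a, b, SimpleGraph.Walk.cons hadj q, h => by
      have h' : ∀ x ∈ q.support, (x : V) ∈ B := fun x hx => h x (by simp [hx])
      have := walk_transfer q h'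
      exact (Reachable.trans (SimpleGraph.Adj.reachable (by exact hadj)) this)

-- support vertices of a walk are in the same component as start
lemma supp_mem_of_walk {a b x : V} (p : G.Walk a b) (hx : x ∈ p.support) :
    G.connectedComponentMk x = G.connectedComponentMk a :=
  ConnectedComponent.sound ((p.takeUntil x hx).reachable.symm)

end aux
section aux2
variable {V : Type*} {G : SimpleGraph V}

lemma comp_supp_connected {A : Set V} (c : (G.induce A).ConnectedComponent) :
    (G.induce (Subtype.val '' c.supp)).Connected := by
  obtain ⟨v, hv⟩ := c.exists_rep
  have hne : (Subtype.val '' c.supp).Nonempty := ⟨v, ⟨v, (by rw [ConnectedComponent.mem_supp_iff]; exact hv), rfl⟩⟩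
  rw [SimpleGraph.connected_iff]
  refine ⟨?_, hne.to_subtype⟩
  rintro ⟨x, hx⟩ ⟨y, hy⟩
  obtain ⟨x', hx', rfl⟩ := hx
  obtain ⟨y', hy', rfl⟩ := hy
  have hxy : (G.induce A).Reachable x' y' := by
    apply ConnectedComponent.exact
    rw [ConnectedComponent.mem_supp_iff] at hx' hy'
    rw [hx', hy']
  obtain ⟨p⟩ := hxy
  have hsup : ∀ z ∈ p.support, (z : V) ∈ Subtype.val '' c.supp := by
    intro z hz
    refine ⟨z, ?_, rfl⟩
    rw [ConnectedComponent.mem_supp_iff, supp_mem_of_walk p hz]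
    rwa [ConnectedComponent.mem_supp_iff] at hx'
  exact walk_transfer p hsup
end aux2
section aux3
variable {V : Type*} {G : SimpleGraph V}

lemma exists_boundary {S : Set V} {W : Finset V} :
    ∀ {a b : ↥S} (_ : (G.induce S).Walk a b), (a : V) ∉ W → (b : V) ∈ W →
    ∃ u w : ↥S, (u : V) ∉ W ∧ (w : V) ∈ W ∧ G.Adj u w
  | a, _, SimpleGraph.Walk.nil, ha, hb => absurd hb ha
  | a, b, SimpleGraph.Walk.cons (v := c) hadj q, ha, hb => by
      by_cases hc : (c : V) ∈ W
      · exact ⟨a, c, ha, hc, hadj⟩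
      · exact exists_boundary q hc hb

lemma exists_connected_finset [Fintype V] {S : Set V} (hS : (G.induce S).Connected)
    (n : ℕ) (hn1 : 1 ≤ n) (hn : n ≤ Nat.card S) :
    ∃ W : Finset V, (W : Set V) ⊆ S ∧ W.card = n ∧ (G.induce (W : Set V)).Connected := by
  induction n, hn1 using Nat.le_induction with
  | base =>
    obtain ⟨v⟩ := hS.nonempty
    refine ⟨{(v : V)}, by simp [v.2], by simp, ?_⟩
    rw [SimpleGraph.connected_iff]
    refine ⟨?_, ⟨⟨v, by simp⟩⟩⟩
    rintro ⟨a, ha⟩ ⟨b, hb⟩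
    simp only [Finset.coe_singleton, Set.mem_singleton_iff] at ha hb
    subst ha; subst hb
    rfl
  | succ n hn1 ih =>
    obtain ⟨W, hWS, hWcard, hWconn⟩ := ih (le_trans (Nat.le_succ n) hn)
    -- exists x ∈ S \ W
    have hlt : W.card < Nat.card S := by omega
    have hfin : S.Finite := Set.toFinite S
    have : ¬ (S ⊆ ↑W) := by
      intro hsub
      have : Nat.card S ≤ W.card := by
        rw [Nat.card_coe_set_eq]
        calc S.ncard ≤ (W : Set V).ncard := Set.ncard_le_ncard hsub (Set.toFinite _)
        _ = W.card := by simp [Set.ncard_coe_finset]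
      omega
    obtain ⟨x, hxS, hxW⟩ := Set.not_subset.mp this
    -- pick w0 ∈ W
    have hWne : W.Nonempty := Finset.card_pos.mp (by omega)
    obtain ⟨w0, hw0⟩ := hWne
    -- walk from x to w0 in induce S
    obtain ⟨p⟩ := hS.preconnected ⟨x, hxS⟩ ⟨w0, hWS hw0⟩
    obtain ⟨u, w, huW, hwW, hadj⟩ := exists_boundary p hxW hw0
    refine ⟨insert (u : V) W, ?_, ?_, ?_⟩
    · rw [Finset.coe_insert]
      exact Set.insert_subset u.2 hWS
    · rw [Finset.card_insert_of_notMem huW, hWcard]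
    · rw [SimpleGraph.connected_iff]
      have hwmem : (w : V) ∈ (insert (u:V) W : Finset V) := Finset.mem_insert_of_mem hwW
      have humem : (u : V) ∈ (insert (u:V) W : Finset V) := Finset.mem_insert_self _ _
      have key : ∀ (a : V) (ha : a ∈ (insert (u:V) W : Finset V)),
          (G.induce ((insert (u:V) W : Finset V) : Set V)).Reachable ⟨a, ha⟩ ⟨w, hwmem⟩ := by
        intro a ha
        rcases Finset.mem_insert.mp ha with h | h
        · subst h
          exact SimpleGraph.Adj.reachable (by exact hadj)
        · obtain ⟨q⟩ := hWconn.preconnected ⟨a, h⟩ ⟨w, hwW⟩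
          have hsup : ∀ z ∈ q.support, (z : V) ∈ ((insert (u:V) W : Finset V) : Set V) := by
            intro z _
            exact Finset.mem_insert_of_mem z.2
          exact walk_transfer q hsup
      refine ⟨?_, ⟨⟨w, hwmem⟩⟩⟩
      rintro ⟨a, ha⟩ ⟨b, hb⟩
      exact (key a ha).trans (key b hb).symm
end aux3
section aux4
variable {V : Type*} {G : SimpleGraph V}

lemma exists_boundary_set {B : Set V} :
    ∀ {a b : V} (_ : G.Walk a b) (ha : a ∈ B), b ∉ B →
    ∃ (u : ↥B) (x : V), x ∉ B ∧ G.Adj u x ∧ (G.induce B).Reachable ⟨a, ha⟩ u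
  | a, _, SimpleGraph.Walk.nil, ha, hb => absurd ha hb
  | a, b, SimpleGraph.Walk.cons (v := c) hadj q, ha, hb => by
      by_cases hc : c ∈ B
      · obtain ⟨u, x, hx, hux, hreach⟩ := exists_boundary_set q hc hb
        refine ⟨u, x, hx, hux, ?_⟩
        have hadj' : (G.induce B).Adj ⟨a, ha⟩ ⟨c, hc⟩ := hadj
        exact hadj'.reachable.trans hreach
      · exact ⟨⟨a, ha⟩, c, hc, hadj, Reachable.refl _⟩

lemma comp_boundary_edge (hG : G.Connected) {B : Set V} (hB : Bᶜ.Nonempty)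
    (c : (G.induce B).ConnectedComponent) :
    ∃ (u : ↥B) (x : V), x ∉ B ∧ G.Adj u x ∧ (G.induce B).connectedComponentMk u = c := by
  obtain ⟨v, hv⟩ := c.exists_rep
  obtain ⟨x₀, hx₀⟩ := hB
  obtain ⟨p⟩ := hG.preconnected (v : V) x₀
  obtain ⟨u, x, hx, hux, hreach⟩ := exists_boundary_set p v.2 hx₀
  refine ⟨u, x, hx, hux, ?_⟩
  have : (G.induce B).connectedComponentMk u = (G.induce B).connectedComponentMk v :=
    ConnectedComponent.sound hreach.symm
  rw [this]; exact hv
end aux4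
theorem stmt10 {V : Type*} [Fintype V] (H : SimpleGraph V) (d : ℕ) (hd : 2 < d)
    (hconn : H.Connected) (hmin : ∀ v, d ≤ H.degree v)
    (V' : Finset V) (hcard : V'.card = d)
    (hVconn : (H.induce (V' : Set V)).Connected)
    (hdisc : ¬ (H.induce ((V' : Set V)ᶜ)).Connected)
    (c₁ : (H.induce ((V' : Set V)ᶜ)).ConnectedComponent)
    (hmax : ∀ c : (H.induce ((V' : Set V)ᶜ)).ConnectedComponent,
      Nat.card c.supp ≤ Nat.card c₁.supp)
    (hassume : ∀ W : Finset V, W.card = d → (H.induce (W : Set V)).Connected →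
      ∀ c : (H.induce ((W : Set V)ᶜ)).ConnectedComponent,
        Nat.card c.supp ≤ Nat.card c₁.supp) :
    ∀ c : (H.induce ((V' : Set V)ᶜ)).ConnectedComponent,
      c ≠ c₁ → Nat.card c.supp ≤ d - 1 := by
  intro c hc
  by_contra hbig
  push_neg at hbig
  set Sc : Set V := Subtype.val '' c.supp with hSc
  set S₁ : Set V := Subtype.val '' c₁.supp with hS₁
  have hScconn : (H.induce Sc).Connected := comp_supp_connected c
  have hcardSc : Nat.card Sc = Nat.card c.supp := by
    rw [Nat.card_coe_set_eq, Nat.card_coe_set_eq,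
      Set.ncard_image_of_injective _ Subtype.val_injective]
  have hcardS₁ : Nat.card S₁ = Nat.card c₁.supp := by
    rw [Nat.card_coe_set_eq, Nat.card_coe_set_eq,
      Set.ncard_image_of_injective _ Subtype.val_injective]
  obtain ⟨W, hWS, hWcard, hWconn⟩ := exists_connected_finset hScconn d (by omega)
    (by omega)
  -- memberships
  have hScA : Sc ⊆ ((V' : Set V)ᶜ) := by rintro y ⟨z, _, rfl⟩; exact z.2
  have hV'W : (V' : Set V) ⊆ ((W : Set V))ᶜ := by
    intro x hx hxW
    exact (hScA (hWS hxW)) hx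
  have hS₁W : S₁ ⊆ ((W : Set V))ᶜ := by
    rintro y ⟨z, hz, rfl⟩ hyW
    obtain ⟨z', hz', hzz'⟩ := hWS hyW
    have : z' = z := Subtype.val_injective hzz'
    subst this
    rw [ConnectedComponent.mem_supp_iff] at hz hz'
    exact hc (hz'.symm.trans hz)
  -- boundary edge from c₁ to V'
  have hBc : (((V' : Set V)ᶜ))ᶜ.Nonempty := by
    rw [compl_compl]
    have : 0 < V'.card := by omega
    obtain ⟨x, hx⟩ := Finset.card_pos.mp this
    exact ⟨x, hx⟩
  obtain ⟨u, x₁, hx₁, hux₁, hcu⟩ := comp_boundary_edge hconn hBc c₁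
  have hx₁V' : x₁ ∈ (V' : Set V) := by simpa using hx₁
  have huS₁ : (u : V) ∈ S₁ := ⟨u, by rw [ConnectedComponent.mem_supp_iff]; exact hcu, rfl⟩
  have hx₁W : x₁ ∈ ((W : Set V))ᶜ := hV'W hx₁V'
  set c' := (H.induce ((W : Set V)ᶜ)).connectedComponentMk ⟨x₁, hx₁W⟩ with hc'
  -- all of V' in c'
  have claim1 : ∀ x ∈ (V' : Set V), x ∈ Subtype.val '' c'.supp := by
    intro x hx
    obtain ⟨p⟩ := hVconn.preconnected ⟨x, hx⟩ ⟨x₁, hx₁V'⟩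
    have hsup : ∀ z ∈ p.support, (z : V) ∈ ((W : Set V))ᶜ := fun z _ => hV'W z.2
    have := walk_transfer p hsup
    exact ⟨⟨x, hV'W hx⟩, by rw [ConnectedComponent.mem_supp_iff]; exact
      ConnectedComponent.sound this, rfl⟩
  have claim2 : ∀ y ∈ S₁, y ∈ Subtype.val '' c'.supp := by
    rintro y ⟨z, hz, rfl⟩
    have hreach : (H.induce ((V' : Set V)ᶜ)).Reachable z u := by
      apply ConnectedComponent.exact
      rw [ConnectedComponent.mem_supp_iff] at hz
      rw [hz, hcu]
    obtain ⟨q⟩ := hreach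
    have hsup : ∀ w ∈ q.support, (w : V) ∈ ((W : Set V))ᶜ := by
      intro w hw
      apply hS₁W
      refine ⟨w, ?_, rfl⟩
      rw [ConnectedComponent.mem_supp_iff, supp_mem_of_walk q hw]
      rwa [ConnectedComponent.mem_supp_iff] at hz
    have hr1 := walk_transfer q hsup
    have huW : (u : V) ∈ ((W : Set V))ᶜ := hS₁W huS₁
    have hadj' : (H.induce ((W : Set V))ᶜ).Adj ⟨(u : V), huW⟩ ⟨x₁, hx₁W⟩ := hux₁
    have hr2 : (H.induce ((W : Set V))ᶜ).Reachable ⟨(z : V), hsup z q.start_mem_support⟩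
        ⟨x₁, hx₁W⟩ := hr1.trans hadj'.reachable
    exact ⟨⟨(z : V), hsup z q.start_mem_support⟩,
      by rw [ConnectedComponent.mem_supp_iff]; exact ConnectedComponent.sound hr2, rfl⟩
  -- cardinality contradiction
  have hsubset : (V' : Set V) ∪ S₁ ⊆ Subtype.val '' c'.supp := by
    rintro y (hy | hy)
    · exact claim1 y hy
    · exact claim2 y hy
  have hdisj : Disjoint (V' : Set V) S₁ := by
    rw [Set.disjoint_left]
    rintro y hy ⟨z, _, rfl⟩
    exact z.2 hy
  have hcard' : Nat.card c'.supp ≤ Nat.card c₁.supp := hassume W hWcard hWconn c'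
  have hge : d + Nat.card c₁.supp ≤ Nat.card c'.supp := by
    have h1 : ((V' : Set V) ∪ S₁).ncard ≤ (Subtype.val '' c'.supp).ncard :=
      Set.ncard_le_ncard hsubset (Set.toFinite _)
    rw [Set.ncard_union_eq hdisj (Set.toFinite _) (Set.toFinite _),
      Set.ncard_coe_finset, hcard] at h1
    have h2 : (Subtype.val '' c'.supp).ncard = Nat.card c'.supp := by
      rw [Set.ncard_image_of_injective _ Subtype.val_injective, Nat.card_coe_set_eq]
    have h3 : S₁.ncard = Nat.card c₁.supp := by
      rw [← hcardS₁, Nat.card_coe_set_eq]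
    omega
  omega
end
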